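/- arXiv:1503.01622 — 4 statements merged into one kernel-verified Lean document; each statement's English description precedes it below -/
import Mathlib

section
/- Let k ≥ 1 be an integer and λ ≥ 1/k. If ζ ∈ ℝ satisfies λ₁(ζ) ≥ kλ + k − 1 (i.e., for every ε > 0 the inequality ‖qζ‖ ≤ q^{-(kλ+k-1)+ε} has infinitely many integer solutions q), then the point (ζ, ζ², …, ζ^k) belongs to H^k_λ, i.e., for every ε > 0 the system max_{1≤j≤k}‖qζ^j‖ ≤ q^{-λ+ε} has infinitely many integer solutions q. -/
/-- distance to the nearest integer -/
noncomputable def dnorm (x : ℝ) : ℝ := |x - round x|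

lemma dnorm_le_abs_sub_int (x : ℝ) (n : ℤ) : dnorm x ≤ |x - n| := round_le x n

lemma abs_pow_succ_sub_pow_succ_le (a b M : ℝ) (ha : |a| ≤ M) (hb : |b| ≤ M) :
    ∀ j : ℕ, |a ^ (j + 1) - b ^ (j + 1)| ≤ ((j : ℝ) + 1) * |a - b| * M ^ j := by
  have hM : 0 ≤ M := le_trans (abs_nonneg a) ha
  intro j
  induction j with
  | zero => simp
  | succ n ih =>
    have hfac : a ^ (n + 1 + 1) - b ^ (n + 1 + 1)
        = a * (a ^ (n + 1) - b ^ (n + 1)) + (a - b) * b ^ (n + 1) := by ring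
    calc |a ^ (n + 1 + 1) - b ^ (n + 1 + 1)|
        = |a * (a ^ (n + 1) - b ^ (n + 1)) + (a - b) * b ^ (n + 1)| := by rw [hfac]
      _ ≤ |a * (a ^ (n + 1) - b ^ (n + 1))| + |(a - b) * b ^ (n + 1)| := abs_add_le _ _
      _ = |a| * |a ^ (n + 1) - b ^ (n + 1)| + |a - b| * |b| ^ (n + 1) := by
          rw [abs_mul, abs_mul, abs_pow]
      _ ≤ M * (((n : ℝ) + 1) * |a - b| * M ^ n) + |a - b| * M ^ (n + 1) := by
          gcongr
      _ = (((n : ℕ) + 1 : ℕ) + 1 : ℝ) * |a - b| * M ^ (n + 1) := by push_cast; ring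

theorem stmt_9 (k : ℕ) (hk : 1 ≤ k) (l : ℝ) (hl : 1 / k ≤ l) (ζ : ℝ)
    (h : ∀ ε > (0 : ℝ),
      {q : ℕ | 0 < q ∧ dnorm ((q : ℝ) * ζ) ≤ (q : ℝ) ^ (-(k * l + k - 1) + ε)}.Infinite) :
    ∀ ε > (0 : ℝ),
      {q : ℕ | 0 < q ∧ ∀ j ∈ Finset.Icc 1 k,
        dnorm ((q : ℝ) * ζ ^ j) ≤ (q : ℝ) ^ (-l + ε)}.Infinite := by
  intro ε hε
  have hk0 : (0 : ℝ) < k := by exact_mod_cast hk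
  have hkR : (1 : ℝ) ≤ (k : ℝ) := by exact_mod_cast hk
  have hkl1 : 1 ≤ (k : ℝ) * l := by
    rw [div_le_iff₀ hk0] at hl
    linarith [hl]
  set ε' : ℝ := min (k * ε / 2) (1 / 2) with hε'def
  have hε'pos : 0 < ε' := lt_min (by positivity) (by norm_num)
  have hε'half : ε' ≤ 1 / 2 := min_le_right _ _
  have hε'ke : ε' ≤ k * ε / 2 := min_le_left _ _
  set C : ℝ := k * (|ζ| + 2) ^ (k - 1) with hCdef
  have hb1 : (1 : ℝ) ≤ |ζ| + 2 := by linarith [abs_nonneg ζ]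
  have hC0 : 0 ≤ C := by positivity
  have hexp : 0 < k * ε - ε' := by nlinarith
  obtain ⟨N, hN⟩ : ∃ N : ℕ, ∀ q : ℕ, N ≤ q → C ≤ (q : ℝ) ^ (k * ε - ε') := by
    have ht : Filter.Tendsto (fun q : ℕ => ((q : ℝ)) ^ (k * ε - ε')) Filter.atTop Filter.atTop :=
      (tendsto_rpow_atTop hexp).comp tendsto_natCast_atTop_atTop
    exact Filter.eventually_atTop.mp (ht.eventually_ge_atTop C)
  -- key pointwise claim
  have key : ∀ q : ℕ, 0 < q → N ≤ q →
      dnorm ((q : ℝ) * ζ) ≤ (q : ℝ) ^ (-(k * l + k - 1) + ε') →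
      (0 < q ^ k ∧ ∀ j ∈ Finset.Icc 1 k,
        dnorm (((q ^ k : ℕ) : ℝ) * ζ ^ j) ≤ ((q ^ k : ℕ) : ℝ) ^ (-l + ε)) := by
    intro q hq hqN hqd
    have hQ1 : (1 : ℝ) ≤ (q : ℝ) := by exact_mod_cast hq
    have hQ0 : (0 : ℝ) < (q : ℝ) := by linarith
    set Q : ℝ := (q : ℝ) with hQdef
    set p : ℤ := round (Q * ζ) with hpdef
    set δ : ℝ := Q * ζ - p with hδdef
    have hδ : |δ| ≤ Q ^ (-(k * l + k - 1) + ε') := hqd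
    have hexpneg : -(k * l + k - 1) + ε' ≤ 0 := by linarith
    have hδ1 : |δ| ≤ 1 := le_trans hδ (Real.rpow_le_one_of_one_le_of_nonpos hQ1 hexpneg)
    have hδ0 : 0 ≤ |δ| := abs_nonneg _
    set M : ℝ := Q * (|ζ| + 2) with hMdef
    have hQζM : |Q * ζ| ≤ M := by
      rw [hMdef, abs_mul, abs_of_pos hQ0]
      have : |ζ| ≤ |ζ| + 2 := by linarith
      exact mul_le_mul_of_nonneg_left this (le_of_lt hQ0)
    have hpM : |(p : ℝ)| ≤ M := by
      have hpeq : (p : ℝ) = Q * ζ - δ := by rw [hδdef]; ring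
      rw [hpeq]
      calc |Q * ζ - δ| ≤ |Q * ζ| + |δ| := abs_sub _ _
        _ ≤ Q * |ζ| + 1 := by
            have h1 : |Q * ζ| = Q * |ζ| := by rw [abs_mul, abs_of_pos hQ0]
            rw [h1]
            exact add_le_add le_rfl hδ1
        _ ≤ Q * (|ζ| + 2) := by nlinarith
    refine ⟨pow_pos hq k, ?_⟩
    intro j hj
    rw [Finset.mem_Icc] at hj
    obtain ⟨hj1, hjk⟩ := hj
    have hQpow : Q ^ (k - j) * Q ^ j = Q ^ k := by rw [← pow_add]; congr 1; omega
    have hfact : ((q ^ k : ℕ) : ℝ) * ζ ^ j - ((p ^ j * (q : ℤ) ^ (k - j) : ℤ) : ℝ)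
        = Q ^ (k - j) * ((Q * ζ) ^ j - (p : ℝ) ^ j) := by
      push_cast
      linear_combination (-(ζ ^ j)) * hQpow
    have step1 : dnorm (((q ^ k : ℕ) : ℝ) * ζ ^ j)
        ≤ Q ^ (k - j) * |(Q * ζ) ^ j - (p : ℝ) ^ j| := by
      have h0 := dnorm_le_abs_sub_int (((q ^ k : ℕ) : ℝ) * ζ ^ j) (p ^ j * (q : ℤ) ^ (k - j))
      rw [hfact, abs_mul, abs_of_nonneg (pow_nonneg (le_of_lt hQ0) _)] at h0
      exact h0
    have hj' : j - 1 + 1 = j := Nat.succ_pred_eq_of_pos hj1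
    have step2 : |(Q * ζ) ^ j - (p : ℝ) ^ j| ≤ (j : ℝ) * |δ| * M ^ (j - 1) := by
      have h0 := abs_pow_succ_sub_pow_succ_le (Q * ζ) (p : ℝ) M hQζM hpM (j - 1)
      rw [hj'] at h0
      have hcast : ((j - 1 : ℕ) : ℝ) + 1 = (j : ℝ) := by exact_mod_cast hj'
      rw [hcast] at h0
      have : Q * ζ - (p : ℝ) = δ := by rw [hδdef]
      rwa [this] at h0
    have step3 : Q ^ (k - j) * ((j : ℝ) * |δ| * M ^ (j - 1)) ≤ C * Q ^ (k - 1) * |δ| := by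
      have hMsplit : M ^ (j - 1) = Q ^ (j - 1) * (|ζ| + 2) ^ (j - 1) := mul_pow _ _ _
      have hQcomb : Q ^ (k - j) * Q ^ (j - 1) = Q ^ (k - 1) := by
        rw [← pow_add]; congr 1; omega
      calc Q ^ (k - j) * ((j : ℝ) * |δ| * M ^ (j - 1))
          = (j : ℝ) * (|ζ| + 2) ^ (j - 1) * (Q ^ (k - j) * Q ^ (j - 1)) * |δ| := by
            rw [hMsplit]; ring
        _ = (j : ℝ) * (|ζ| + 2) ^ (j - 1) * Q ^ (k - 1) * |δ| := by rw [hQcomb]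
        _ ≤ (k : ℝ) * (|ζ| + 2) ^ (k - 1) * Q ^ (k - 1) * |δ| := by
            gcongr
            all_goals first
              | exact hb1
              | omega
              | exact_mod_cast hjk
        _ = C * Q ^ (k - 1) * |δ| := by rw [hCdef]
    have step4 : C * Q ^ (k - 1) * |δ| ≤ C * Q ^ (k - 1) * Q ^ (-(k * l + k - 1) + ε') :=
      mul_le_mul_of_nonneg_left hδ (by positivity)
    have hnpow : Q ^ (k - 1 : ℕ) = Q ^ ((k : ℝ) - 1) := by
      rw [← Real.rpow_natCast Q (k - 1), Nat.cast_sub hk, Nat.cast_one]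
    have step5 : C * Q ^ (k - 1 : ℕ) * Q ^ (-(k * l + k - 1) + ε')
        = C * Q ^ (-((k : ℝ) * l) + ε') := by
      rw [hnpow, mul_assoc, ← Real.rpow_add hQ0]
      congr 1
      ring_nf
    have step6 : C * Q ^ (-((k : ℝ) * l) + ε') ≤ ((q ^ k : ℕ) : ℝ) ^ (-l + ε) := by
      have h1 : C * Q ^ (-((k : ℝ) * l) + ε') ≤ Q ^ ((k : ℝ) * ε - ε') * Q ^ (-((k : ℝ) * l) + ε') :=
        mul_le_mul_of_nonneg_right (hN q hqN) (Real.rpow_nonneg (le_of_lt hQ0) _)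
      have h2 : Q ^ ((k : ℝ) * ε - ε') * Q ^ (-((k : ℝ) * l) + ε') = Q ^ ((k : ℝ) * (-l + ε)) := by
        rw [← Real.rpow_add hQ0]
        congr 1
        ring
      have h3 : Q ^ ((k : ℝ) * (-l + ε)) = ((q ^ k : ℕ) : ℝ) ^ (-l + ε) := by
        rw [Real.rpow_mul (le_of_lt hQ0), Real.rpow_natCast, hQdef]
        norm_cast
      rw [h2, h3] at h1
      exact h1
    calc dnorm (((q ^ k : ℕ) : ℝ) * ζ ^ j)
        ≤ Q ^ (k - j) * |(Q * ζ) ^ j - (p : ℝ) ^ j| := step1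
      _ ≤ Q ^ (k - j) * ((j : ℝ) * |δ| * M ^ (j - 1)) := by
          exact mul_le_mul_of_nonneg_left step2 (pow_nonneg (le_of_lt hQ0) _)
      _ ≤ C * Q ^ (k - 1) * |δ| := step3
      _ ≤ C * Q ^ (k - 1) * Q ^ (-(k * l + k - 1) + ε') := step4
      _ = C * Q ^ (-((k : ℝ) * l) + ε') := step5
      _ ≤ ((q ^ k : ℕ) : ℝ) ^ (-l + ε) := step6
  -- assemble infiniteness
  have hS := (h ε' hε'pos).diff (Set.finite_Iio N)
  have hinj : Set.InjOn (fun q : ℕ => q ^ k)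
      ({q : ℕ | 0 < q ∧ dnorm ((q : ℝ) * ζ) ≤ (q : ℝ) ^ (-(k * l + k - 1) + ε')} \ Set.Iio N) :=
    fun a _ b _ hab => Nat.pow_left_injective (by omega) hab
  have himg := hS.image hinj
  apply himg.mono
  rintro x ⟨q, ⟨⟨hq1, hqd⟩, hqN⟩, rfl⟩
  simp only [Set.mem_setOf_eq]
  have hqN' : N ≤ q := by simpa [Set.mem_Iio, not_lt] using hqN
  exact key q hq1 hqN' hqd
end

section
/- Let P₁(X) = X and P₂,…,P_k ∈ ℤ[X] with leading coefficients c_j and degrees d_j satisfying 1 = d₁ ≤ ⋯ ≤ d_k; let t = max_j (d_{j+1} − d_j) ≥ 1 be the diameter, Δ = ∏|c_j|, D = Δ^{d_k}, and for ζ ∈ ℝ let Σ = max_j max_{|z−ζ|≤1/2} |P_j'(z)| and C₀ = 1/(2DΣ). If a positive integer x satisfies max_{1≤j≤k} ‖P_j(ζ)x‖ < C₀ x^{−t}, and y is the nearest integer to ζx with y/x = y₀/x₀ in lowest terms and x₁ = x₀/gcd(x₀,Δ), then x₁^{d_k} divides x. -/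
open Polynomial

lemma aux_eval (p : Polynomial ℤ) (n : ℕ) (hn : 0 < n) (a : ℤ) :
    (((p.scaleRoots (n:ℤ)).eval a : ℤ) : ℝ) = (n:ℝ) ^ p.natDegree * Polynomial.aeval ((a:ℝ)/(n:ℝ)) p := by
  have hne : (n:ℝ) ≠ 0 := Nat.cast_ne_zero.mpr hn.ne'
  have h1 := Polynomial.scaleRoots_eval₂_mul (p := p) (Int.castRingHom ℝ) ((a:ℝ)/(n:ℝ)) (n:ℤ)
  simp only [eq_intCast, Int.cast_natCast] at h1
  rw [mul_div_cancel₀ _ hne] at h1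
  have h2 : ((a:ℤ):ℝ) = (Int.castRingHom ℝ) a := rfl
  rw [h2, Polynomial.eval₂_at_apply] at h1
  simp only [eq_intCast] at h1
  rw [Polynomial.aeval_def, algebraMap_int_eq]
  exact h1

lemma aux_mod (p : Polynomial ℤ) (n a : ℤ) :
    n ∣ ((p.scaleRoots n).eval a - p.leadingCoeff * a ^ p.natDegree) := by
  have hdeg : (p.scaleRoots n).natDegree < p.natDegree + 1 := by
    rw [Polynomial.natDegree_scaleRoots]; omega
  rw [Polynomial.eval_eq_sum_range' hdeg, Finset.sum_range_succ,
    Polynomial.coeff_scaleRoots_natDegree]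
  rw [add_sub_cancel_right]
  apply Finset.dvd_sum
  intro i hi
  rw [Finset.mem_range] at hi
  rw [Polynomial.coeff_scaleRoots]
  exact Dvd.dvd.mul_right (Dvd.dvd.mul_left (dvd_pow_self n (by omega)) _) _

lemma aux_mvt (p : Polynomial ℤ) (ζ Sig : ℝ)
    (hb : ∀ z : ℝ, |z - ζ| ≤ 1/2 → |Polynomial.aeval z (Polynomial.derivative p)| ≤ Sig)
    (r : ℝ) (hr : |r - ζ| ≤ 1/2) :
    |Polynomial.aeval r p - Polynomial.aeval ζ p| ≤ Sig * |r - ζ| := by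
  set q := p.map (Int.castRingHom ℝ) with hq
  have haev : ∀ z : ℝ, Polynomial.aeval z p = q.eval z := by
    intro z; rw [hq, Polynomial.eval_map, Polynomial.aeval_def, algebraMap_int_eq]
  have haev' : ∀ z : ℝ, Polynomial.aeval z (Polynomial.derivative p) = q.derivative.eval z := by
    intro z
    rw [hq, Polynomial.derivative_map, Polynomial.eval_map, Polynomial.aeval_def, algebraMap_int_eq]
  have key := Convex.norm_image_sub_le_of_norm_hasDerivWithin_le
    (f := fun z => q.eval z) (f' := fun z => q.derivative.eval z)
    (s := Metric.closedBall ζ (1/2)) (C := Sig)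
    (fun z _ => (Polynomial.hasDerivAt q z).hasDerivWithinAt)
    (fun z hz => by
      show ‖Polynomial.eval z (Polynomial.derivative q)‖ ≤ Sig
      rw [Real.norm_eq_abs, ← haev' z]
      exact hb z (by rwa [Metric.mem_closedBall, Real.dist_eq] at hz))
    (convex_closedBall _ _)
    (Metric.mem_closedBall.mpr (by rw [Real.dist_eq]; simpa using hr))
    (Metric.mem_closedBall_self (by norm_num))
  rw [haev, haev, abs_sub_comm, abs_sub_comm r ζ]
  simpa [Real.norm_eq_abs] using key

set_option maxHeartbeats 2000000 in
theorem stmt_11 (k : ℕ) (hk : 1 ≤ k) (P : ℕ → Polynomial ℤ)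
    (hP1 : P 0 = Polynomial.X)
    (hmono : ∀ i j, i ≤ j → j < k → (P i).natDegree ≤ (P j).natDegree)
    (t : ℕ)
    (ht : t = (Finset.range (k - 1)).sup fun j => (P (j + 1)).natDegree - (P j).natDegree)
    (ht1 : 1 ≤ t)
    (Δ : ℕ) (hΔ : (Δ : ℤ) = ∏ j ∈ Finset.range k, |(P j).leadingCoeff|)
    (D : ℕ) (hD : D = Δ ^ (P (k - 1)).natDegree)
    (ζ : ℝ) (Sig : ℝ)
    (hSig : IsGreatest {r : ℝ | ∃ j < k, ∃ z : ℝ, |z - ζ| ≤ 1 / 2 ∧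
      r = |Polynomial.aeval z (Polynomial.derivative (P j))|} Sig)
    (C₀ : ℝ) (hC₀ : C₀ = 1 / (2 * D * Sig))
    (x : ℕ) (hx : 0 < x)
    (happrox : ∀ j < k, dnorm ((x : ℝ) * Polynomial.aeval ζ (P j)) < C₀ * (x : ℝ) ^ (-(t : ℝ)))
    (y : ℤ) (hy : y = round (ζ * x))
    (x₀ : ℕ) (y₀ : ℤ) (hx₀ : 0 < x₀)
    (hcop : Int.gcd y₀ (x₀ : ℤ) = 1)
    (hred : (y : ℚ) / (x : ℚ) = (y₀ : ℚ) / (x₀ : ℚ))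
    (x₁ : ℕ) (hx₁ : x₁ = x₀ / Nat.gcd x₀ Δ) :
    x₁ ^ (P (k - 1)).natDegree ∣ x := by
  have hk0 : 0 < k := hk
  have hxR : (1:ℝ) ≤ (x:ℝ) := by exact_mod_cast hx
  have hPdeg : ∀ j < k, 1 ≤ (P j).natDegree := by
    intro j hj
    have := hmono 0 j (Nat.zero_le _) hj
    simpa [hP1] using this
  have hPne : ∀ j < k, P j ≠ 0 := by
    intro j hj h0
    have := hPdeg j hj; rw [h0] at this; simp at this
  have hΔ1 : 1 ≤ Δ := by
    rcases Nat.eq_zero_or_pos Δ with h | h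
    · exfalso
      rw [h] at hΔ
      obtain ⟨j, hj, hj0⟩ := Finset.prod_eq_zero_iff.mp hΔ.symm
      rw [Finset.mem_range] at hj
      exact hPne j hj (Polynomial.leadingCoeff_eq_zero.mp (abs_eq_zero.mp hj0))
    · exact h
  have hD1 : 1 ≤ D := by rw [hD]; exact Nat.one_le_pow _ _ hΔ1
  have hSig1 : (1:ℝ) ≤ Sig := by
    apply hSig.2
    refine ⟨0, hk0, ζ, by simp, by simp [hP1]⟩
  have hSigpos : (0:ℝ) < Sig := zero_lt_one.trans_le hSig1
  have hDR : (1:ℝ) ≤ (D:ℝ) := by exact_mod_cast hD1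
  have hDRpos : (0:ℝ) < (D:ℝ) := zero_lt_one.trans_le hDR
  have hC₀pos : 0 < C₀ := by rw [hC₀]; positivity
  have hC₀half : C₀ ≤ 1/2 := by
    rw [hC₀]
    rw [div_le_div_iff₀ (by positivity) (by norm_num)]
    nlinarith
  have hxtpos : (0:ℝ) < (x:ℝ)^t := by positivity
  have hxt1 : (1:ℝ) ≤ (x:ℝ)^t := one_le_pow₀ hxR
  have hxpow : ∀ j < k, dnorm ((x:ℝ) * Polynomial.aeval ζ (P j)) < C₀ / (x:ℝ)^t := by
    intro j hj
    have h := happrox j hj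
    rwa [Real.rpow_neg (by positivity), Real.rpow_natCast, ← div_eq_mul_inv] at h
  have hyy : y = round ((x:ℝ) * ζ) := by rw [hy, mul_comm]
  have hθ : |(x:ℝ) * ζ - (y:ℝ)| < C₀ / (x:ℝ)^t := by
    have h := hxpow 0 hk0
    rw [hP1] at h
    simp only [Polynomial.aeval_X, dnorm] at h
    rw [hyy]
    exact h
  -- x₀ divides x
  have hyx : y * (x₀:ℤ) = y₀ * (x:ℤ) := by
    have hxQ : ((x:ℚ)) ≠ 0 := by positivity
    have hx₀Q : ((x₀:ℚ)) ≠ 0 := by positivity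
    rw [div_eq_div_iff hxQ hx₀Q] at hred
    exact_mod_cast hred
  have hx₀x : (x₀:ℤ) ∣ (x:ℤ) := by
    have hco : IsCoprime (x₀:ℤ) y₀ := by
      rw [Int.isCoprime_iff_gcd_eq_one, Int.gcd_comm]
      exact hcop
    have : (x₀:ℤ) ∣ y₀ * (x:ℤ) := ⟨y, by linarith [hyx]⟩
    exact hco.dvd_of_dvd_mul_left this
  have hx₀xn : x₀ ∣ x := by exact_mod_cast hx₀x
  have hx₀lex : x₀ ≤ x := Nat.le_of_dvd hx hx₀xn
  set r : ℝ := (y₀:ℝ)/(x₀:ℝ) with hrdef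
  have hxRne : (x:ℝ) ≠ 0 := by positivity
  have hrl : (y:ℝ)/(x:ℝ) = r := by
    rw [hrdef]
    exact_mod_cast congrArg (fun q : ℚ => (q : ℝ)) hred
  have hrsub : r - ζ = ((y:ℝ) - (x:ℝ)*ζ)/(x:ℝ) := by
    rw [← hrl]; field_simp
  have hrx : (x:ℝ) * |r - ζ| = |(x:ℝ)*ζ - (y:ℝ)| := by
    rw [hrsub, abs_div, abs_of_pos (by positivity : (0:ℝ) < (x:ℝ))]
    rw [mul_div_cancel₀ _ hxRne, abs_sub_comm]
  have hrζ : |r - ζ| ≤ |(x:ℝ)*ζ - (y:ℝ)| := by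
    nlinarith [abs_nonneg (r - ζ), abs_nonneg ((x:ℝ)*ζ - (y:ℝ))]
  have hrball : |r - ζ| ≤ 1/2 := by
    have h1 : C₀ / (x:ℝ)^t ≤ C₀ := by
      rw [div_le_iff₀ hxtpos]; nlinarith
    linarith [hrζ.trans hθ.le]
  have est : ∀ j < k, |(x:ℝ) * Polynomial.aeval r (P j)
      - (round ((x:ℝ) * Polynomial.aeval ζ (P j)) : ℝ)| < 1 / ((x:ℝ)^t * (D:ℝ)) := by
    intro j hj
    have hm := hxpow j hj
    rw [dnorm] at hm
    have hmvt := aux_mvt (P j) ζ Sig (fun z hz => hSig.2 ⟨j, hj, z, hz, rfl⟩) r hrball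
    have h1 : |(x:ℝ) * Polynomial.aeval r (P j) - (x:ℝ) * Polynomial.aeval ζ (P j)|
        ≤ Sig * |(x:ℝ)*ζ - (y:ℝ)| := by
      rw [← mul_sub, abs_mul, abs_of_pos (by positivity : (0:ℝ) < (x:ℝ)), ← hrx]
      nlinarith [abs_nonneg (r - ζ)]
    have h2 : |(x:ℝ) * Polynomial.aeval r (P j)
        - (round ((x:ℝ) * Polynomial.aeval ζ (P j)) : ℝ)|
        ≤ |(x:ℝ) * Polynomial.aeval r (P j) - (x:ℝ) * Polynomial.aeval ζ (P j)|
        + |(x:ℝ) * Polynomial.aeval ζ (P j)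
          - (round ((x:ℝ) * Polynomial.aeval ζ (P j)) : ℝ)| := abs_sub_le _ _ _
    have h3 : Sig * |(x:ℝ)*ζ - (y:ℝ)| ≤ Sig * (C₀ / (x:ℝ)^t) :=
      mul_le_mul_of_nonneg_left hθ.le hSigpos.le
    have hkey : (Sig + 1) * C₀ ≤ 1 / (D:ℝ) := by
      rw [hC₀, mul_one_div, div_le_div_iff₀ (by positivity) hDRpos]
      nlinarith
    have h4 : Sig * (C₀ / (x:ℝ)^t) + C₀ / (x:ℝ)^t ≤ 1 / ((x:ℝ)^t * (D:ℝ)) := by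
      have e1 : Sig * (C₀ / (x:ℝ)^t) + C₀ / (x:ℝ)^t = ((Sig+1)*C₀)/(x:ℝ)^t := by ring
      rw [e1]
      calc ((Sig+1)*C₀)/(x:ℝ)^t ≤ (1/(D:ℝ))/(x:ℝ)^t := by gcongr
        _ = 1 / ((x:ℝ)^t * (D:ℝ)) := by rw [div_div, mul_comm ((D:ℝ)) ((x:ℝ)^t)]
    linarith
  -- basic facts about x₁
  have hgdvd : Nat.gcd x₀ Δ ∣ x₀ := Nat.gcd_dvd_left _ _
  have hg : x₁ * Nat.gcd x₀ Δ = x₀ := by rw [hx₁]; exact Nat.div_mul_cancel hgdvd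
  have hgle : Nat.gcd x₀ Δ ≤ Δ := Nat.le_of_dvd hΔ1 (Nat.gcd_dvd_right _ _)
  have hgpos : 0 < Nat.gcd x₀ Δ := Nat.gcd_pos_of_pos_left _ hx₀
  have hx₁pos : 0 < x₁ := by
    rcases Nat.eq_zero_or_pos x₁ with h | h
    · rw [h, zero_mul] at hg; omega
    · exact h
  have hx₁x₀ : x₁ ∣ x₀ := ⟨Nat.gcd x₀ Δ, hg.symm⟩
  have hx₀leΔ : x₀ ≤ x₁ * Δ := by
    calc x₀ = x₁ * Nat.gcd x₀ Δ := hg.symm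
      _ ≤ x₁ * Δ := Nat.mul_le_mul_left _ hgle
  -- main induction
  have key : ∀ j, j < k → x₁ ^ (P j).natDegree ∣ x := by
    intro j
    induction j with
    | zero =>
      intro _
      rw [hP1, Polynomial.natDegree_X, pow_one]
      exact hx₁x₀.trans hx₀xn
    | succ j ih =>
      intro hj1
      have hjk : j < k := Nat.lt_of_succ_lt hj1
      have Hj := ih hjk
      set d := (P (j+1)).natDegree with hddef
      set dj := (P j).natDegree with hdjdef
      have hdle : dj ≤ d := hmono j (j+1) (Nat.le_succ j) hj1
      have hgap : d - dj ≤ t := by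
        rw [ht]
        exact Finset.le_sup (f := fun j => (P (j + 1)).natDegree - (P j).natDegree)
          (Finset.mem_range.mpr (by omega))
      have hdmax : dj ≤ (P (k-1)).natDegree := hmono j (k-1) (by omega) (by omega)
      have hd1 : 1 ≤ d := hPdeg (j+1) hj1
      -- integers
      set A : ℤ := ((P (j+1)).scaleRoots (x₀:ℤ)).eval y₀ with hAdef
      have hA : ((A:ℤ):ℝ) = (x₀:ℝ)^d * Polynomial.aeval r (P (j+1)) :=
        aux_eval (P (j+1)) x₀ hx₀ y₀
      set m : ℤ := round ((x:ℝ) * Polynomial.aeval ζ (P (j+1))) with hmdef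
      have hest := est (j+1) hj1
      have hx₀dpos : (0:ℝ) < (x₀:ℝ)^d := by positivity
      have hbig : |(x:ℝ)*(A:ℝ) - (m:ℝ)*(x₀:ℝ)^d| < (x₀:ℝ)^d / ((x:ℝ)^t * (D:ℝ)) := by
        have e1 : (x:ℝ)*(A:ℝ) - (m:ℝ)*(x₀:ℝ)^d
            = (x₀:ℝ)^d * ((x:ℝ) * Polynomial.aeval r (P (j+1)) - (m:ℝ)) := by
          rw [hA]; ring
        rw [e1, abs_mul, abs_of_pos hx₀dpos]
        calc (x₀:ℝ)^d * |(x:ℝ) * Polynomial.aeval r (P (j+1)) - (m:ℝ)|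
            < (x₀:ℝ)^d * (1 / ((x:ℝ)^t * (D:ℝ))) := by
              exact mul_lt_mul_of_pos_left hest hx₀dpos
          _ = (x₀:ℝ)^d / ((x:ℝ)^t * (D:ℝ)) := by ring
      -- the integer F
      set w : ℕ := x / x₁^dj with hwdef
      have hw : x = x₁^dj * w := (Nat.mul_div_cancel' Hj).symm
      have hx₁dj : x₁^dj ∣ x₀^d :=
        dvd_trans (pow_dvd_pow_of_dvd hx₁x₀ dj) (pow_dvd_pow x₀ hdle)
      set q : ℕ := x₀^d / x₁^dj with hqdef
      have hq : x₀^d = x₁^dj * q := (Nat.mul_div_cancel' hx₁dj).symm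
      set F : ℤ := (w:ℤ) * A - m * (q:ℤ) with hFdef
      have hwR : (x:ℝ) = (x₁:ℝ)^dj * (w:ℝ) := by exact_mod_cast hw
      have hqR : (x₀:ℝ)^d = (x₁:ℝ)^dj * (q:ℝ) := by exact_mod_cast hq
      have hx₁djpos : (0:ℝ) < (x₁:ℝ)^dj := by positivity
      have hFr : ((x₁:ℝ)^dj) * |(F:ℝ)| = |(x:ℝ)*(A:ℝ) - (m:ℝ)*(x₀:ℝ)^d| := by
        rw [← abs_of_pos hx₁djpos, ← abs_mul]
        congr 1
        rw [hwR, hqR, hFdef]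
        push_cast
        ring
      -- counting inequality
      have hcount : x₀^d ≤ x₁^dj * D * x^t := by
        calc x₀^d = x₀^dj * x₀^(d - dj) := by rw [← pow_add]; congr 1; omega
          _ ≤ (x₁*Δ)^dj * x^t := by
            apply Nat.mul_le_mul
            · exact Nat.pow_le_pow_left hx₀leΔ _
            · exact (Nat.pow_le_pow_left hx₀lex _).trans (Nat.pow_le_pow_right hx hgap)
          _ = x₁^dj * Δ^dj * x^t := by rw [mul_pow]
          _ ≤ x₁^dj * D * x^t := by
            apply Nat.mul_le_mul_right
            apply Nat.mul_le_mul_left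
            rw [hD]
            exact Nat.pow_le_pow_right hΔ1 hdmax
      have hcountR : (x₀:ℝ)^d ≤ (x₁:ℝ)^dj * (D:ℝ) * (x:ℝ)^t := by exact_mod_cast hcount
      have hF0 : F = 0 := by
        have h1 : ((x₁:ℝ)^dj) * |(F:ℝ)| < (x₀:ℝ)^d / ((x:ℝ)^t * (D:ℝ)) := hFr ▸ hbig
        have h2 : (x₀:ℝ)^d / ((x:ℝ)^t * (D:ℝ)) ≤ (x₁:ℝ)^dj := by
          rw [div_le_iff₀ (by positivity)]
          calc (x₀:ℝ)^d ≤ (x₁:ℝ)^dj * (D:ℝ) * (x:ℝ)^t := hcountR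
            _ = (x₁:ℝ)^dj * ((x:ℝ)^t * (D:ℝ)) := by ring
        have h3 : |(F:ℝ)| < 1 := by
          nlinarith [abs_nonneg ((F:ℝ))]
        have h4 : |F| < 1 := by exact_mod_cast h3
        exact Int.abs_lt_one_iff.mp h4
      have hFeq : (w:ℤ) * A = m * (q:ℤ) := by
        have := sub_eq_zero.mp (hFdef ▸ hF0)
        linarith [this]
      -- endgame via factorization
      have hΔne : Δ ≠ 0 := by omega
      have hx₀ne : x₀ ≠ 0 := hx₀.ne'
      have hx₁ne : x₁ ≠ 0 := hx₁pos.ne'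
      have hwne : w ≠ 0 := by
        intro h; rw [h, Nat.mul_zero] at hw; omega
      have hqne : q ≠ 0 := by
        intro h; rw [h, Nat.mul_zero] at hq
        exact (pow_ne_zero d hx₀ne) hq
      apply (Nat.factorization_le_iff_dvd (pow_ne_zero _ hx₁ne) hx.ne').mp
      rw [Finsupp.le_def]
      intro p
      rw [Nat.factorization_pow, Finsupp.smul_apply, smul_eq_mul]
      rcases Nat.eq_zero_or_pos (x₁.factorization p) with hep | hep
      · rw [hep, Nat.mul_zero]; exact Nat.zero_le _
      set ep := x₁.factorization p with hepdef
      have hpmem : p ∈ x₁.primeFactors := by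
        rw [← Nat.support_factorization, Finsupp.mem_support_iff]; omega
      have hppr : p.Prime := Nat.prime_of_mem_primeFactors hpmem
      have hpx₁ : p ∣ x₁ := Nat.dvd_of_mem_primeFactors hpmem
      set a := x₀.factorization p with hadef
      set δ := Δ.factorization p with hδdef
      have hamin : a = ep + min a δ := by
        have h1 : x₀.factorization = x₁.factorization + (Nat.gcd x₀ Δ).factorization := by
          have h0 := Nat.factorization_mul hx₁ne hgpos.ne'
          rw [hg] at h0; exact h0
        have h2 : (Nat.gcd x₀ Δ).factorization p = min a δ := by
          rw [Nat.factorization_gcd hx₀ne hΔne]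
          rfl
        have h3 := congrArg (fun f : ℕ →₀ ℕ => f p) h1
        simp only [Finsupp.add_apply] at h3
        rw [h2] at h3
        exact h3
      have haeq : a = ep + δ := by
        rcases le_total a δ with hc | hc
        · rw [min_eq_left hc] at hamin; omega
        · rw [min_eq_right hc] at hamin; exact hamin
      -- leading coefficient
      set c := (P (j+1)).leadingCoeff with hcdef
      have hcdvd : c.natAbs ∣ Δ := by
        have h1 : |c| ∣ (Δ:ℤ) := by
          rw [hΔ]; exact Finset.dvd_prod_of_mem _ (Finset.mem_range.mpr hj1)
        rw [Int.abs_eq_natAbs] at h1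
        exact_mod_cast h1
      have hcne : c.natAbs ≠ 0 :=
        Int.natAbs_ne_zero.mpr (Polynomial.leadingCoeff_ne_zero.mpr (hPne _ hj1))
      have hcδ : c.natAbs.factorization p ≤ δ :=
        Finsupp.le_def.mp ((Nat.factorization_le_iff_dvd hcne hΔne).mpr hcdvd) p
      have hnotdvd : ¬ ((p:ℤ)^(δ+1) ∣ A) := by
        intro hdvd
        have hpa : (p:ℤ)^(δ+1) ∣ (x₀:ℤ) := by
          have h0 : p^(δ+1) ∣ x₀ :=
            (Nat.Prime.pow_dvd_iff_le_factorization hppr hx₀ne).mpr (by omega)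
          exact_mod_cast h0
        have hsub := aux_mod (P (j+1)) (x₀:ℤ) y₀
        have h2 : (p:ℤ)^(δ+1) ∣ c * y₀^d := by
          have h3 : (p:ℤ)^(δ+1) ∣ (A - (A - c * y₀ ^ d)) :=
            dvd_sub hdvd (hpa.trans hsub)
          simpa using h3
        have hprime : Prime (p:ℤ) := Nat.prime_iff_prime_int.mp hppr
        have hpy : ¬ ((p:ℤ) ∣ y₀^d) := by
          intro hp
          have hp1 : (p:ℤ) ∣ y₀ := hprime.dvd_of_dvd_pow hp
          have hp2 : p ∣ y₀.natAbs := by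
            have := Int.natAbs_dvd_natAbs.mpr hp1
            simpa using this
          have hp3 : p ∣ Int.gcd y₀ (x₀:ℤ) := by
            apply Nat.dvd_gcd hp2
            simpa using (hpx₁.trans hx₁x₀)
          rw [hcop] at hp3
          exact hppr.ne_one (Nat.dvd_one.mp hp3)
        have h4 : (p:ℤ)^(δ+1) ∣ c := hprime.pow_dvd_of_dvd_mul_right _ hpy h2
        have h5 : p^(δ+1) ∣ c.natAbs := by
          have h5' := Int.natAbs_dvd_natAbs.mpr h4
          rwa [Int.natAbs_pow, Int.natAbs_natCast] at h5'
        have h6 := (Nat.Prime.pow_dvd_iff_le_factorization hppr hcne).mp h5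
        omega
      have hAne : A ≠ 0 := by
        intro h; exact hnotdvd (by rw [h]; exact dvd_zero _)
      have hAabs : A.natAbs ≠ 0 := Int.natAbs_ne_zero.mpr hAne
      have hmne : m ≠ 0 := by
        intro h
        rw [h, zero_mul] at hFeq
        rcases mul_eq_zero.mp hFeq with h1 | h1
        · exact (Int.natCast_ne_zero.mpr hwne) h1
        · exact hAne h1
      have hnat : w * A.natAbs = m.natAbs * q := by
        have h1 := congrArg Int.natAbs hFeq
        simpa [Int.natAbs_mul] using h1
      set vw := w.factorization p with hvwdef
      set vA := A.natAbs.factorization p with hvAdef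
      set vm := m.natAbs.factorization p with hvmdef
      set vq := q.factorization p with hvqdef
      have hfac : vw + vA = vm + vq := by
        have h1 : (w * A.natAbs).factorization p = (m.natAbs * q).factorization p := by
          rw [hnat]
        rwa [Nat.factorization_mul hwne hAabs,
          Nat.factorization_mul (Int.natAbs_ne_zero.mpr hmne) hqne,
          Finsupp.add_apply, Finsupp.add_apply] at h1
      have hvq : vq + dj * ep = d * a := by
        have h1 : (x₀^d).factorization p = (x₁^dj * q).factorization p := by rw [hq]
        rw [Nat.factorization_pow,
          Nat.factorization_mul (pow_ne_zero _ hx₁ne) hqne, Nat.factorization_pow] at h1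
        simp only [Finsupp.add_apply, Finsupp.smul_apply, smul_eq_mul] at h1
        rw [← hadef, ← hepdef, ← hvqdef] at h1
        omega
      have hvA : vA ≤ δ := by
        by_contra hcon
        push_neg at hcon
        have h1 : p^(δ+1) ∣ A.natAbs :=
          (Nat.Prime.pow_dvd_iff_le_factorization hppr hAabs).mpr (by omega)
        apply hnotdvd
        rw [← Int.natAbs_dvd_natAbs, Int.natAbs_pow, Int.natAbs_natCast]
        exact h1
      have hvx : x.factorization p = dj * ep + vw := by
        have h1 : x.factorization p = (x₁^dj * w).factorization p := by rw [← hw]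
        rw [Nat.factorization_mul (pow_ne_zero _ hx₁ne) hwne, Nat.factorization_pow] at h1
        simp only [Finsupp.add_apply, Finsupp.smul_apply, smul_eq_mul] at h1
        exact h1
      rw [hvx]
      have hda : d * a = d * ep + d * δ := by rw [haeq, Nat.mul_add]
      have hdδ : δ ≤ d * δ := Nat.le_mul_of_pos_left δ (by omega)
      linarith
  have hfin := key (k-1) (by omega)
  exact hfin
end

section
/- Let k ≥ 1 and P₁(X)=X, P₂,…,P_k ∈ ℚ[X] with degrees 1 = d₁ ≤ ⋯ ≤ d_k. For any λ ≥ 1/k and any ζ ∈ ℝ: if ζ ∈ H^1_{d_kλ + d_k − 1} (i.e. for all ε > 0, ‖qζ‖ ≤ q^{-(d_kλ+d_k−1)+ε} has infinitely many solutions q), then the point (P₁(ζ),…,P_k(ζ)) lies in H^k_λ, i.e. for all ε > 0, max_j ‖qP_j(ζ)‖ ≤ q^{-λ+ε} has infinitely many positive integer solutions q. -/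
open Polynomial Filter

theorem Polynomial.exists_nat_mul_coeff_eq_intCast {ι : Type*} (s : Finset ι) (P : ι → ℚ[X]) :
    ∃ N : ℕ, 0 < N ∧ ∀ j ∈ s, ∀ i, ∃ z : ℤ, (N : ℚ) * (P j).coeff i = z := by
  refine ⟨∏ j ∈ s, ∏ i ∈ (P j).support, ((P j).coeff i).den,
    Finset.prod_pos fun j _ => Finset.prod_pos fun i _ => Rat.den_pos _, fun j hj i => ?_⟩
  by_cases hi : i ∈ (P j).support
  · obtain ⟨t, ht⟩ := (Finset.dvd_prod_of_mem (fun i => ((P j).coeff i).den) hi).trans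
      (Finset.dvd_prod_of_mem (fun j => ∏ i ∈ (P j).support, ((P j).coeff i).den) hj)
    refine ⟨t * ((P j).coeff i).num, ?_⟩
    rw [ht]
    push_cast
    rw [mul_comm _ (t : ℚ), mul_assoc, Rat.den_mul_eq_num]
  · exact ⟨0, by simp [notMem_support_iff.mp hi]⟩

theorem Polynomial.exists_intCast_eq_mul_pow_mul_aeval_div {p : ℚ[X]} {N : ℕ}
    (hN : ∀ i, ∃ z : ℤ, (N : ℚ) * p.coeff i = z) {d : ℕ} (hd : p.natDegree ≤ d)
    (a b : ℤ) (hb : b ≠ 0) :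
    ∃ m : ℤ, (N : ℝ) * (b : ℝ) ^ d * aeval ((a : ℝ) / b) p = m := by
  choose z hz using hN
  refine ⟨∑ i ∈ Finset.range (d + 1), z i * a ^ i * b ^ (d - i), ?_⟩
  rw [aeval_eq_sum_range' (Nat.lt_succ_of_le hd), Finset.mul_sum]
  push_cast
  refine Finset.sum_congr rfl fun i hi => ?_
  have hz' : ((z i : ℤ) : ℝ) = (N : ℝ) * (p.coeff i : ℝ) := by exact_mod_cast (hz i).symm
  have hb' : (b : ℝ) ≠ 0 := Int.cast_ne_zero.mpr hb
  rw [hz', Rat.smul_def, ← pow_sub_mul_pow (b : ℝ) (Finset.mem_range_succ_iff.mp hi), div_pow]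
  field_simp

theorem Polynomial.exists_lipschitzOnWith_aeval {R : Type*} [CommSemiring R] [Algebra R ℝ]
    (p : R[X]) {s : Set ℝ} (hs : IsCompact s) :
    ∃ K, LipschitzOnWith K (fun x : ℝ => aeval x p) s :=
  (contDiff_aeval p 1).locallyLipschitz.locallyLipschitzOn.exists_lipschitzOnWith_of_compact hs

theorem Polynomial.exists_dnorm_mul_pow_mul_aeval_le {p : ℚ[X]} {N : ℕ}
    (hN : ∀ i, ∃ z : ℤ, (N : ℚ) * p.coeff i = z) {d : ℕ} (hd : p.natDegree ≤ d) (ζ : ℝ) :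
    ∃ C : ℝ, 0 ≤ C ∧ ∀ q : ℕ, 0 < q →
      dnorm (N * q ^ d * aeval ζ p) ≤ N * C * q ^ d * (dnorm (q * ζ) / q) := by
  obtain ⟨K, hK⟩ := exists_lipschitzOnWith_aeval p (isCompact_closedBall ζ 1)
  refine ⟨K, K.2, fun q hq => ?_⟩
  have hq' : (0 : ℝ) < q := Nat.cast_pos.mpr hq
  obtain ⟨m, hm⟩ := exists_intCast_eq_mul_pow_mul_aeval_div hN hd (round ((q : ℝ) * ζ)) q
    (Int.natCast_ne_zero.mpr hq.ne')
  push_cast at hm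
  set x : ℝ := round ((q : ℝ) * ζ) / q
  have hx : |x - ζ| = dnorm (q * ζ) / q := by
    rw [show x - ζ = -((q * ζ - round ((q : ℝ) * ζ)) / q) by simp only [x]; field_simp; ring,
      abs_neg, abs_div, abs_of_pos hq', dnorm]
  have hx_mem : x ∈ Metric.closedBall ζ 1 := by
    rw [Metric.mem_closedBall, Real.dist_eq, hx, div_le_one hq']
    exact (abs_sub_round _).trans (by linarith [(Nat.one_le_cast (α := ℝ)).mpr hq])
  calc dnorm (N * q ^ d * aeval ζ p)
      ≤ |N * q ^ d * aeval ζ p - m| := round_le _ m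
    _ = N * q ^ d * |aeval x p - aeval ζ p| := by
      rw [← hm, ← mul_sub, abs_mul, abs_of_nonneg (by positivity), abs_sub_comm]
    _ ≤ N * q ^ d * (K * |x - ζ|) := by
      gcongr
      exact hK.dist_le_mul x hx_mem ζ (Metric.mem_closedBall_self zero_le_one)
    _ = N * K * q ^ d * (dnorm (q * ζ) / q) := by rw [hx]; ring

theorem Polynomial.eventually_dnorm_mul_aeval_le {p : ℚ[X]} {N : ℕ} (hN0 : 0 < N)
    (hN : ∀ i, ∃ z : ℤ, (N : ℚ) * p.coeff i = z) {d : ℕ} (hd0 : 0 < d) (hd : p.natDegree ≤ d)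
    (ζ l : ℝ) {ε : ℝ} (hε : 0 < ε) :
    ∀ᶠ q : ℕ in atTop, dnorm (q * ζ) ≤ (q : ℝ) ^ (-((d : ℝ) * l + d - 1) + d * ε / 2) →
      dnorm (((N * q ^ d : ℕ) : ℝ) * aeval ζ p) ≤ ((N * q ^ d : ℕ) : ℝ) ^ (-l + ε) := by
  obtain ⟨C, hC0, hC⟩ := exists_dnorm_mul_pow_mul_aeval_le hN hd ζ
  have hN' : (0 : ℝ) < N := Nat.cast_pos.mpr hN0
  have hlarge : Tendsto (fun q : ℕ => (N : ℝ) ^ (-l + ε) * (q : ℝ) ^ ((d : ℝ) * ε / 2))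
      atTop atTop :=
    ((tendsto_rpow_atTop (by positivity)).comp tendsto_natCast_atTop_atTop).const_mul_atTop
      (by positivity)
  filter_upwards [eventually_gt_atTop 0, hlarge.eventually_ge_atTop (N * C)]
    with q hq hqC happrox
  have hq' : (0 : ℝ) < q := Nat.cast_pos.mpr hq
  calc dnorm (((N * q ^ d : ℕ) : ℝ) * aeval ζ p)
      ≤ N * C * q ^ d * (dnorm (q * ζ) / q) := by push_cast; exact hC q hq
    _ ≤ N * C * q ^ d * (q ^ (-((d : ℝ) * l + d - 1) + d * ε / 2) / q) := by gcongr
    _ = N * C * q ^ (-((d : ℝ) * l) + d * ε / 2) := by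
      rw [mul_assoc, ← Real.rpow_natCast, mul_div_assoc', ← Real.rpow_add hq',
        ← Real.rpow_sub_one hq'.ne']
      ring_nf
    _ ≤ N ^ (-l + ε) * q ^ ((d : ℝ) * ε / 2) * q ^ (-((d : ℝ) * l) + d * ε / 2) := by gcongr
    _ = ((N * q ^ d : ℕ) : ℝ) ^ (-l + ε) := by
      rw [mul_assoc, ← Real.rpow_add hq', Nat.cast_mul, Nat.cast_pow,
        Real.mul_rpow hN'.le (by positivity), ← Real.rpow_natCast_mul hq'.le]
      ring_nf

theorem infinite_setOf_forall_dnorm_mul_aeval_le {ι : Type*} (s : Finset ι) (P : ι → ℚ[X])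
    {d : ℕ} (hd0 : 0 < d) (hdeg : ∀ j ∈ s, (P j).natDegree ≤ d) {l ζ : ℝ}
    (h : ∀ ε > (0 : ℝ),
      {q : ℕ | 0 < q ∧ dnorm (q * ζ) ≤ (q : ℝ) ^ (-((d : ℝ) * l + d - 1) + ε)}.Infinite) :
    ∀ ε > (0 : ℝ),
      {Q : ℕ | 0 < Q ∧ ∀ j ∈ s, dnorm (Q * aeval ζ (P j)) ≤ (Q : ℝ) ^ (-l + ε)}.Infinite := by
  intro ε hε
  obtain ⟨N, hN0, hN⟩ := exists_nat_mul_coeff_eq_intCast s P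
  have hgood : ∀ᶠ q : ℕ in atTop,
      0 < q ∧ dnorm (q * ζ) ≤ (q : ℝ) ^ (-((d : ℝ) * l + d - 1) + d * ε / 2) →
      0 < N * q ^ d ∧ ∀ j ∈ s, dnorm (((N * q ^ d : ℕ) : ℝ) * aeval ζ (P j)) ≤
        ((N * q ^ d : ℕ) : ℝ) ^ (-l + ε) := by
    filter_upwards [(eventually_all_finset s).2 fun j hj =>
      eventually_dnorm_mul_aeval_le hN0 (hN j hj) hd0 (hdeg j hj) ζ l hε] with q hq happrox
    exact ⟨Nat.mul_pos hN0 (pow_pos happrox.1 d), fun j hj => hq j hj happrox.2⟩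
  have hunbounded : Tendsto (fun q : ℕ => N * q ^ d) atTop atTop :=
    tendsto_atTop_mono (fun q => (Nat.le_self_pow hd0.ne' q).trans (Nat.le_mul_of_pos_left _ hN0))
      tendsto_id
  exact Nat.frequently_atTop_iff_infinite.1 <| hunbounded.frequently <|
    (Nat.frequently_atTop_iff_infinite.2 (h (d * ε / 2) (by positivity))).mp hgood

theorem stmt_14_general (k : ℕ) (hk : 1 ≤ k) (P : ℕ → Polynomial ℚ)
    (hmono : ∀ i j, i ≤ j → j < k → (P i).natDegree ≤ (P j).natDegree)
    (hd1 : (P 0).natDegree = 1)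
    (l : ℝ) (ζ : ℝ)
    (h : ∀ ε > (0 : ℝ),
      {q : ℕ | 0 < q ∧ dnorm ((q : ℝ) * ζ) ≤
        (q : ℝ) ^ (-(((P (k - 1)).natDegree : ℝ) * l + (P (k - 1)).natDegree - 1) + ε)}.Infinite) :
    ∀ ε > (0 : ℝ),
      {q : ℕ | 0 < q ∧ ∀ j < k,
        dnorm ((q : ℝ) * Polynomial.aeval ζ (P j)) ≤ (q : ℝ) ^ (-l + ε)}.Infinite := by
  have hd0 : 0 < (P (k - 1)).natDegree :=
    lt_of_lt_of_le (by omega) (hmono 0 (k - 1) (Nat.zero_le _) (by omega))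
  have hdeg : ∀ j ∈ Finset.range k, (P j).natDegree ≤ (P (k - 1)).natDegree := fun j hj =>
    hmono j (k - 1) (by rw [Finset.mem_range] at hj; omega) (by omega)
  simpa only [Finset.mem_range] using infinite_setOf_forall_dnorm_mul_aeval_le _ P hd0 hdeg h

theorem stmt_14 (k : ℕ) (hk : 1 ≤ k) (P : ℕ → Polynomial ℚ)
    (hP1 : P 0 = Polynomial.X)
    (hmono : ∀ i j, i ≤ j → j < k → (P i).natDegree ≤ (P j).natDegree)
    (hd1 : (P 0).natDegree = 1)
    (l : ℝ) (hl : 1 / k ≤ l) (ζ : ℝ)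
    (h : ∀ ε > (0 : ℝ),
      {q : ℕ | 0 < q ∧ dnorm ((q : ℝ) * ζ) ≤
        (q : ℝ) ^ (-(((P (k - 1)).natDegree : ℝ) * l + (P (k - 1)).natDegree - 1) + ε)}.Infinite) :
    ∀ ε > (0 : ℝ),
      {q : ℕ | 0 < q ∧ ∀ j < k,
        dnorm ((q : ℝ) * Polynomial.aeval ζ (P j)) ≤ (q : ℝ) ^ (-l + ε)}.Infinite :=
  stmt_14_general k hk P hmono hd1 l ζ h
end

section
/- Let x₀, Δ, d be positive integers and S an integer such that gcd(x₀^d, S) divides Δ^d. If x₀^d divides x·S for a positive integer x, then x₁^d divides x, where x₁ = x₀/gcd(x₀,Δ). -/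
/-!
Cancelling `g = gcd(x₀ᵈ, S)` from `x₀ᵈ ∣ x S` leaves `x₀ᵈ / g` coprime to `S / g`, so `x₀ᵈ / g ∣ x`.
Since `g` divides both `x₀ᵈ` and `Δᵈ`, it divides `gcd(x₀, Δ)ᵈ`, hence
`x₁ᵈ = x₀ᵈ / gcd(x₀, Δ)ᵈ` divides `x₀ᵈ / g`.
-/

theorem Nat.div_gcd_dvd_of_dvd_mul {a x s : ℕ} (ha : 0 < a) (h : a ∣ x * s) :
    a / a.gcd s ∣ x := by
  refine (Nat.coprime_div_gcd_div_gcd (Nat.gcd_pos_of_pos_left s ha)).dvd_of_dvd_mul_right ?_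
  rw [← Nat.mul_div_assoc x (Nat.gcd_dvd_right a s)]
  exact Nat.div_dvd_div (Nat.gcd_dvd_left a s) h

theorem stmt_18_general (x₀ Δ d x : ℕ) (hx₀ : 0 < x₀)
    (S : ℤ)
    (hgcd : (Int.gcd ((x₀ : ℤ) ^ d) S : ℕ) ∣ Δ ^ d)
    (hdvd : ((x₀ : ℤ) ^ d) ∣ (x : ℤ) * S) :
    (x₀ / Nat.gcd x₀ Δ) ^ d ∣ x := by
  rw [Int.gcd, Int.natAbs_pow, Int.natAbs_natCast] at hgcd
  have hdvd' : x₀ ^ d ∣ x * S.natAbs := by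
    simpa [Int.natAbs_mul, Int.natAbs_pow] using Int.natAbs_dvd_natAbs.mpr hdvd
  have hg : (x₀ ^ d).gcd S.natAbs ∣ x₀.gcd Δ ^ d := by
    rw [← Nat.pow_gcd_pow]
    exact Nat.dvd_gcd (Nat.gcd_dvd_left _ _) hgcd
  calc (x₀ / x₀.gcd Δ) ^ d = x₀ ^ d / x₀.gcd Δ ^ d := Nat.div_pow (Nat.gcd_dvd_left x₀ Δ)
    _ ∣ x₀ ^ d / (x₀ ^ d).gcd S.natAbs :=
      Nat.div_dvd_div_left (pow_dvd_pow_of_dvd (Nat.gcd_dvd_left x₀ Δ) d) hg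
    _ ∣ x := Nat.div_gcd_dvd_of_dvd_mul (pow_pos hx₀ d) hdvd'

theorem stmt_18 (x₀ Δ d x : ℕ) (hx₀ : 0 < x₀) (hΔ : 0 < Δ) (hd : 0 < d) (hx : 0 < x)
    (S : ℤ)
    (hgcd : (Int.gcd ((x₀ : ℤ) ^ d) S : ℕ) ∣ Δ ^ d)
    (hdvd : ((x₀ : ℤ) ^ d) ∣ (x : ℤ) * S) :
    (x₀ / Nat.gcd x₀ Δ) ^ d ∣ x :=
  stmt_18_general x₀ Δ d x hx₀ S hgcd hdvd
end
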